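/- With U(m,j) = C(m-j,j)·2^j, define A_t = Σ_{j=0}^{t-2} U(3t-2, j) − Σ_{j≥t} U(3t-2, j), B_t = Σ_{j=0}^{t-1} U(3t-1, j) − Σ_{j≥t+1} U(3t-1, j), and D_t = Σ_{j=0}^{t-1} U(3t, j) − Σ_{j≥t+1} U(3t, j). Then D_t = 2·A_t + B_t for every t ≥ 1. -/

import Mathlib

def U (m j : ℕ) : ℕ := Nat.choose (m - j) j * 2 ^ j

def A (t : ℕ) : ℤ :=
  (∑ j ∈ Finset.range (t - 1), U (3 * t - 2) j : ℤ)
    - ∑ j ∈ Finset.Icc t (3 * t), (U (3 * t - 2) j : ℤ)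

def B (t : ℕ) : ℤ :=
  (∑ j ∈ Finset.range t, U (3 * t - 1) j : ℤ)
    - ∑ j ∈ Finset.Icc (t + 1) (3 * t), (U (3 * t - 1) j : ℤ)

def D (t : ℕ) : ℤ :=
  (∑ j ∈ Finset.range t, U (3 * t) j : ℤ)
    - ∑ j ∈ Finset.Icc (t + 1) (3 * t), (U (3 * t) j : ℤ)

/-! Applying the recurrence `U (m + 2) (j + 1) = U (m + 1) (j + 1) + 2 * U m j` termwise, with the
index shift `j + 1 ↦ j` in the second summand, splits each of the two sums defining `D t` into the
corresponding sum of `B t` plus twice the corresponding sum of `A t`; the terms `j = 0` agree since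
`U m 0 = 1`, and the extra top term `U (3t - 2) (3t)` of `A t` vanishes. -/

open Finset

@[simp]
lemma U_zero_right (m : ℕ) : U m 0 = 1 := by
  simp [U]

lemma U_eq_zero_of_lt {m j : ℕ} (h : m < j) : U m j = 0 := by
  rw [U, Nat.sub_eq_zero_of_le h.le, Nat.choose_eq_zero_of_lt (by omega), zero_mul]

lemma U_add_two_add_one (m j : ℕ) : U (m + 2) (j + 1) = U (m + 1) (j + 1) + 2 * U m j := by
  rcases le_or_gt j m with h | h
  · rw [U, U, U, show m + 2 - (j + 1) = m - j + 1 by omega,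
      show m + 1 - (j + 1) = m - j by omega, Nat.choose_succ_succ, pow_succ]
    ring
  · rw [U_eq_zero_of_lt h, U_eq_zero_of_lt (by omega : m + 1 < j + 1), U,
      Nat.choose_eq_zero_of_lt (by omega), zero_mul, mul_zero, add_zero]

lemma sum_range_U_add_two (m k : ℕ) :
    ∑ j ∈ range (k + 1), U (m + 2) j = ∑ j ∈ range (k + 1), U (m + 1) j
      + 2 * ∑ j ∈ range k, U m j := by
  simp only [sum_range_succ', U_add_two_add_one, sum_add_distrib, mul_sum, U_zero_right]
  ring

lemma sum_Icc_U_add_two (m a b : ℕ) :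
    ∑ j ∈ Icc (a + 1) (b + 1), U (m + 2) j = ∑ j ∈ Icc (a + 1) (b + 1), U (m + 1) j
      + 2 * ∑ j ∈ Icc a b, U m j := by
  simp only [← map_add_right_Icc a b 1, sum_map, addRightEmbedding_apply, U_add_two_add_one,
    sum_add_distrib, mul_sum]

theorem stmt15 (t : ℕ) (ht : 1 ≤ t) : D t = 2 * A t + B t := by
  obtain ⟨s, rfl⟩ := Nat.exists_eq_add_of_le' ht
  have hrange : ∑ j ∈ range (s + 1), U (3 * s + 3) j
      = ∑ j ∈ range (s + 1), U (3 * s + 2) j + 2 * ∑ j ∈ range s, U (3 * s + 1) j :=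
    sum_range_U_add_two (3 * s + 1) s
  have hIcc : ∑ j ∈ Icc (s + 2) (3 * s + 3), U (3 * s + 3) j
      = ∑ j ∈ Icc (s + 2) (3 * s + 3), U (3 * s + 2) j
        + 2 * ∑ j ∈ Icc (s + 1) (3 * s + 2), U (3 * s + 1) j :=
    sum_Icc_U_add_two (3 * s + 1) (s + 1) (3 * s + 2)
  have htop : ∑ j ∈ Icc (s + 1) (3 * s + 3), U (3 * s + 1) j
      = ∑ j ∈ Icc (s + 1) (3 * s + 2), U (3 * s + 1) j := by
    rw [sum_Icc_succ_top (by omega), U_eq_zero_of_lt (by omega), add_zero]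
  rw [A, B, D, show 3 * (s + 1) - 2 = 3 * s + 1 by omega,
    show 3 * (s + 1) - 1 = 3 * s + 2 by omega, show 3 * (s + 1) = 3 * s + 3 by omega,
    Nat.add_sub_cancel]
  simp only [← Nat.cast_sum, htop, hrange, hIcc]
  push_cast
  ring
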